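/- arXiv:2501.05720 — 6 statements merged into one kernel-verified Lean document; each statement's English description precedes it below -/
import Mathlib

section
/- Let P be a finite poset that is irreducible with respect to ordinal sum, and let k be a field. If there exists a compatible monomial order ⪯ on S = k[x_α : α ∈ L(P)] such that F_{L(P)} forms a Khovanskii basis of R(L(P)) with respect to ⪯, then P is (2+2)-free and (1+1+1)-free. -/
/-!
For a compatible order the initial terms of the generators `f_{α,β}` of `R(L)` are the monomials
`x_α x_β` with `α, β` incomparable. If `F_L` is a Khovanskii basis, these generate the initial
algebra, so the exponent of the initial term of every nonzero `g ∈ R(L)` is a sum of such pairs: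
every variable `x_z` in it is matched with some `x_t`, `t` incomparable with `z`. Hence no monomial
containing a variable comparable with all of its other variables is ever an initial term.

A `2+2` or a `1+1+1` in `P` yields lower sets and two products `f_{α,β} f_{γ,δ}`,
`f_{α',β'} f_{γ',δ'}` with the same initial monomial
`x_α x_β x_γ x_δ = x_{α'} x_{β'} x_{γ'} x_{δ'}`, all of whose other monomials contain the meet or
the join of all the lower sets involved. Their difference lies in `R(L)`, is nonzero (some
monomial occurs in it exactly once), and consists only of such monomials, a contradiction.
-/

open MvPolynomial

/-- The leading exponent (multidegree) of a multivariate polynomial with respect to a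
monomial order. -/
noncomputable def MonomialOrder.degree' {σ : Type*} (m : MonomialOrder σ)
    {R : Type*} [CommSemiring R] (f : MvPolynomial σ R) : σ →₀ ℕ :=
  m.toSyn.symm (f.support.sup fun d => m.toSyn d)

/-- The leading term `in_⪯(f)` of a multivariate polynomial with respect to a
monomial order. -/
noncomputable def MonomialOrder.leadingTerm' {σ : Type*} (m : MonomialOrder σ)
    {R : Type*} [CommSemiring R] (f : MvPolynomial σ R) : MvPolynomial σ R :=
  MvPolynomial.monomial (m.degree' f) (f.coeff (m.degree' f))

/-- `F` is a Khovanskii (SAGBI) basis of the subalgebra `R` with respect to the monomial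
order `m`: the subalgebra generated by the leading terms of nonzero elements of `F` equals
the subalgebra generated by the leading terms of nonzero elements of `R`. -/
def IsKhovanskiiBasis {σ k : Type*} [Field k] (m : MonomialOrder σ)
    (R : Subalgebra k (MvPolynomial σ k)) (F : Set (MvPolynomial σ k)) : Prop :=
  F ⊆ (R : Set (MvPolynomial σ k)) ∧
  Algebra.adjoin k (m.leadingTerm' '' {f ∈ F | f ≠ 0}) =
    Algebra.adjoin k (m.leadingTerm' '' {f ∈ (R : Set (MvPolynomial σ k)) | f ≠ 0})

/-- The binomial `f_{α,β} = x_α x_β - x_{α⊓β} x_{α⊔β}`. -/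
noncomputable def hibiPoly (k : Type*) [Field k] {σ : Type*} [Lattice σ] (α β : σ) :
    MvPolynomial σ k :=
  X α * X β - X (α ⊓ β) * X (α ⊔ β)

/-- The set `F_L = {f_{α,β} : α, β ∈ L incomparable}`. -/
def hibiSet (k : Type*) [Field k] (σ : Type*) [Lattice σ] : Set (MvPolynomial σ k) :=
  {g | ∃ α β : σ, ¬ α ≤ β ∧ ¬ β ≤ α ∧ g = hibiPoly k α β}

/-- A monomial order is compatible if the leading term of each `f_{α,β}` is `x_α x_β`. -/
def IsCompatible (k : Type*) [Field k] {σ : Type*} [Lattice σ] (m : MonomialOrder σ) : Prop :=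
  ∀ α β : σ, ¬ α ≤ β → ¬ β ≤ α → m.leadingTerm' (hibiPoly k α β) = X α * X β

/-- `P` is `(2+2)`-free. -/
def TwoTwoFree (P : Type*) [PartialOrder P] : Prop :=
  ¬ ∃ a b c d : P, a < b ∧ c < d ∧ a ≠ c ∧ a ≠ d ∧ b ≠ c ∧ b ≠ d ∧
    ¬ a ≤ c ∧ ¬ c ≤ a ∧ ¬ a ≤ d ∧ ¬ d ≤ a ∧ ¬ b ≤ c ∧ ¬ c ≤ b ∧ ¬ b ≤ d ∧ ¬ d ≤ b

/-- `P` is `(1+1+1)`-free: no antichain of three elements. -/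
def OneOneOneFree (P : Type*) [PartialOrder P] : Prop :=
  ¬ ∃ a b c : P, a ≠ b ∧ a ≠ c ∧ b ≠ c ∧
    ¬ a ≤ b ∧ ¬ b ≤ a ∧ ¬ a ≤ c ∧ ¬ c ≤ a ∧ ¬ b ≤ c ∧ ¬ c ≤ b

/-- `P` is irreducible with respect to ordinal sum. -/
def OrdinalSumIrreducible (P : Type*) [PartialOrder P] : Prop :=
  ¬ ∃ A B : Set P, A.Nonempty ∧ B.Nonempty ∧ Disjoint A B ∧ A ∪ B = Set.univ ∧
    ∀ a ∈ A, ∀ b ∈ B, a < b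


namespace Hibi

section Exponents

variable {σ : Type*}

noncomputable def pairExp (a b : σ) : σ →₀ ℕ := Finsupp.single a 1 + Finsupp.single b 1

lemma pairExp_apply_ne_zero {a b t : σ} : pairExp a b t ≠ 0 ↔ t = a ∨ t = b := by
  classical
  simp only [pairExp, Finsupp.add_apply, Finsupp.single_apply]
  split_ifs <;> simp_all [eq_comm]

lemma pairExp_add_pairExp_apply_ne_zero {a b c d t : σ} :
    (pairExp a b + pairExp c d) t ≠ 0 ↔ t = a ∨ t = b ∨ t = c ∨ t = d := by
  rw [Finsupp.add_apply, Ne, Nat.add_eq_zero_iff, not_and_or, ← Ne, ← Ne,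
    pairExp_apply_ne_zero, pairExp_apply_ne_zero, or_assoc]

lemma pairExp_add_pairExp_ne {a b c d a' b' c' d' t : σ} (h : t ≠ a ∧ t ≠ b ∧ t ≠ c ∧ t ≠ d)
    (h' : t = a' ∨ t = b' ∨ t = c' ∨ t = d') :
    pairExp a b + pairExp c d ≠ pairExp a' b' + pairExp c' d' := by
  intro heq
  have ht := pairExp_add_pairExp_apply_ne_zero.2 h'
  rw [← heq, pairExp_add_pairExp_apply_ne_zero] at ht
  obtain ⟨h₁, h₂, h₃, h₄⟩ := h
  rcases ht with ht | ht | ht | ht <;> contradiction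

variable [Preorder σ]

variable (σ) in
noncomputable def incompExponents : AddSubmonoid (σ →₀ ℕ) :=
  AddSubmonoid.closure {v | ∃ a b : σ, ¬ a ≤ b ∧ ¬ b ≤ a ∧ v = pairExp a b}

lemma pairExp_mem_incompExponents {a b : σ} (hab : ¬ a ≤ b) (hba : ¬ b ≤ a) :
    pairExp a b ∈ incompExponents σ :=
  AddSubmonoid.subset_closure ⟨a, b, hab, hba, rfl⟩

lemma exists_incomparable_of_mem_incompExponents {v : σ →₀ ℕ} (hv : v ∈ incompExponents σ)
    {z : σ} (hz : v z ≠ 0) : ∃ t, v t ≠ 0 ∧ ¬ z ≤ t ∧ ¬ t ≤ z := by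
  induction hv using AddSubmonoid.closure_induction generalizing z with
  | mem v hv =>
    obtain ⟨a, b, hab, hba, rfl⟩ := hv
    rcases pairExp_apply_ne_zero.1 hz with rfl | rfl
    · exact ⟨b, pairExp_apply_ne_zero.2 (Or.inr rfl), hab, hba⟩
    · exact ⟨a, pairExp_apply_ne_zero.2 (Or.inl rfl), hba, hab⟩
  | zero => exact absurd rfl hz
  | add x y _ _ ihx ihy =>
    rw [Finsupp.add_apply] at hz
    by_cases hx : x z = 0
    · obtain ⟨t, ht, h⟩ := ihy (by simpa [hx] using hz)
      exact ⟨t, by simp [ht], h⟩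
    · obtain ⟨t, ht, h⟩ := ihx hx
      exact ⟨t, by simp [ht], h⟩

lemma notMem_incompExponents_of_comparable {v : σ →₀ ℕ} {z : σ} (hz : v z ≠ 0)
    (h : ∀ t, v t ≠ 0 → z ≤ t ∨ t ≤ z) : v ∉ incompExponents σ := fun hv => by
  obtain ⟨t, ht, hzt, htz⟩ := exists_incomparable_of_mem_incompExponents hv hz
  exact (h t ht).elim hzt htz

lemma pairExp_add_pairExp_notMem_of_le {a b c d z : σ} (hz : z = a ∨ z = b ∨ z = c ∨ z = d)
    (ha : z ≤ a) (hb : z ≤ b) (hc : z ≤ c) (hd : z ≤ d) :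
    pairExp a b + pairExp c d ∉ incompExponents σ :=
  notMem_incompExponents_of_comparable (pairExp_add_pairExp_apply_ne_zero.2 hz) fun _ ht => by
    rcases pairExp_add_pairExp_apply_ne_zero.1 ht with rfl | rfl | rfl | rfl <;> simp [*]

lemma pairExp_add_pairExp_notMem_of_ge {a b c d z : σ} (hz : z = a ∨ z = b ∨ z = c ∨ z = d)
    (ha : a ≤ z) (hb : b ≤ z) (hc : c ≤ z) (hd : d ≤ z) :
    pairExp a b + pairExp c d ∉ incompExponents σ :=
  notMem_incompExponents_of_comparable (pairExp_add_pairExp_apply_ne_zero.2 hz) fun _ ht => by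
    rcases pairExp_add_pairExp_apply_ne_zero.1 ht with rfl | rfl | rfl | rfl <;> simp [*]

end Exponents

section InitialAlgebra

variable {σ R : Type*}

lemma support_subset_of_mem_adjoin [CommSemiring R] {W : AddSubmonoid (σ →₀ ℕ)}
    {S : Set (MvPolynomial σ R)} (hS : ∀ p ∈ S, (p.support : Set (σ →₀ ℕ)) ⊆ W)
    {x : MvPolynomial σ R} (hx : x ∈ Algebra.adjoin R S) :
    (x.support : Set (σ →₀ ℕ)) ⊆ W := by
  classical
  induction hx using Algebra.adjoin_induction with
  | mem p hp => exact hS p hp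
  | algebraMap r =>
    refine (Finset.coe_subset.2 (support_monomial_subset (s := 0) (a := r))).trans ?_
    simp
  | add p q _ _ hp hq =>
    exact (Finset.coe_subset.2 support_add).trans (by simpa using And.intro hp hq)
  | mul p q _ _ hp hq =>
    intro v hv
    obtain ⟨u, hu, u', hu', rfl⟩ := Finset.mem_add.1 (support_mul p q hv)
    exact W.add_mem (hp hu) (hq hu')

lemma X_mul_X_eq_monomial [CommSemiring R] (a b : σ) :
    (X a * X b : MvPolynomial σ R) = monomial (pairExp a b) 1 := by
  rw [X, X, monomial_mul, one_mul, pairExp]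

variable [Lattice σ] [Field R] {m : MonomialOrder σ}

lemma degree_mem_incompExponents (hc : IsCompatible R m)
    (hkb : IsKhovanskiiBasis m (Algebra.adjoin R (hibiSet R σ)) (hibiSet R σ))
    {g : MvPolynomial σ R} (hg : g ∈ Algebra.adjoin R (hibiSet R σ)) (hg0 : g ≠ 0) :
    m.degree g ∈ incompExponents σ := by
  classical
  have hin : m.leadingTerm g ∈ Algebra.adjoin R (m.leadingTerm' '' {f ∈ hibiSet R σ | f ≠ 0}) :=
    hkb.2 ▸ Algebra.subset_adjoin ⟨g, ⟨hg, hg0⟩, rfl⟩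
  refine support_subset_of_mem_adjoin ?_ hin ?_
  · rintro _ ⟨_, ⟨⟨a, b, hab, hba, rfl⟩, -⟩, rfl⟩
    rw [hc a b hab hba, X_mul_X_eq_monomial]
    refine (Finset.coe_subset.2 support_monomial_subset).trans ?_
    simpa using pairExp_mem_incompExponents hab hba
  · rw [Finset.mem_coe, mem_support_iff, MonomialOrder.leadingTerm, coeff_monomial, if_pos rfl]
    exact m.leadingCoeff_ne_zero_iff.2 hg0

lemma eq_zero_of_support_notMem (hc : IsCompatible R m)
    (hkb : IsKhovanskiiBasis m (Algebra.adjoin R (hibiSet R σ)) (hibiSet R σ))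
    {g : MvPolynomial σ R} (hg : g ∈ Algebra.adjoin R (hibiSet R σ))
    (hsupp : ∀ v ∈ g.support, v ∉ incompExponents σ) : g = 0 := by
  by_contra hg0
  exact hsupp _ (m.degree_mem_support hg0) (degree_mem_incompExponents hc hkb hg hg0)

end InitialAlgebra

section Products

variable {σ R : Type*} [Lattice σ] [Field R]

lemma hibiPoly_eq_sub (a b : σ) :
    hibiPoly R a b = monomial (pairExp a b) 1 - monomial (pairExp (a ⊓ b) (a ⊔ b)) 1 := by
  rw [hibiPoly, X_mul_X_eq_monomial, X_mul_X_eq_monomial]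

lemma hibiPoly_mul_hibiPoly (a b c d : σ) :
    hibiPoly R a b * hibiPoly R c d =
      monomial (pairExp a b + pairExp c d) 1
        - monomial (pairExp a b + pairExp (c ⊓ d) (c ⊔ d)) 1
        - monomial (pairExp (a ⊓ b) (a ⊔ b) + pairExp c d) 1
        + monomial (pairExp (a ⊓ b) (a ⊔ b) + pairExp (c ⊓ d) (c ⊔ d)) 1 := by
  simp only [hibiPoly_eq_sub, sub_mul, mul_sub, monomial_mul, one_mul]
  ring

lemma hibiPoly_mem_adjoin (a b : σ) : hibiPoly R a b ∈ Algebra.adjoin R (hibiSet R σ) := by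
  by_cases hab : a ≤ b
  · simp [hibiPoly, inf_of_le_left hab, sup_of_le_right hab]
  by_cases hba : b ≤ a
  · simp [hibiPoly, inf_of_le_right hba, sup_of_le_left hba, mul_comm]
  exact Algebra.subset_adjoin ⟨a, b, hab, hba, rfl⟩

variable {m : MonomialOrder σ}

theorem hibiPoly_mul_eq_of_notMem (hc : IsCompatible R m)
    (hkb : IsKhovanskiiBasis m (Algebra.adjoin R (hibiSet R σ)) (hibiSet R σ))
    {a b c d a' b' c' d' : σ} (hlead : pairExp a b + pairExp c d = pairExp a' b' + pairExp c' d')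
    (h₁ : pairExp a b + pairExp (c ⊓ d) (c ⊔ d) ∉ incompExponents σ)
    (h₂ : pairExp (a ⊓ b) (a ⊔ b) + pairExp c d ∉ incompExponents σ)
    (h₃ : pairExp (a ⊓ b) (a ⊔ b) + pairExp (c ⊓ d) (c ⊔ d) ∉ incompExponents σ)
    (h₄ : pairExp a' b' + pairExp (c' ⊓ d') (c' ⊔ d') ∉ incompExponents σ)
    (h₅ : pairExp (a' ⊓ b') (a' ⊔ b') + pairExp c' d' ∉ incompExponents σ)
    (h₆ : pairExp (a' ⊓ b') (a' ⊔ b') + pairExp (c' ⊓ d') (c' ⊔ d') ∉ incompExponents σ) :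
    hibiPoly R a b * hibiPoly R c d = hibiPoly R a' b' * hibiPoly R c' d' := by
  classical
  rw [← sub_eq_zero]
  refine eq_zero_of_support_notMem hc hkb
    (sub_mem (mul_mem (hibiPoly_mem_adjoin a b) (hibiPoly_mem_adjoin c d))
      (mul_mem (hibiPoly_mem_adjoin a' b') (hibiPoly_mem_adjoin c' d'))) fun v hv hW => ?_
  rw [mem_support_iff, hibiPoly_mul_hibiPoly, hibiPoly_mul_hibiPoly, hlead] at hv
  have hne : ∀ {u}, u ∉ incompExponents σ → u ≠ v := fun hu h => hu (h ▸ hW)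
  simp [coeff_monomial, hne h₁, hne h₂, hne h₃, hne h₄, hne h₅, hne h₆] at hv

end Products

section Configurations

variable {σ R : Type*} [Field R] {m : MonomialOrder σ}

section TwoTwo

variable [Lattice σ] {A B C D Z : σ}

lemma inf_eq_of_twoTwo (hAB : A ≤ B) (hCD : C ≤ D) (hA : B ⊓ D ≤ A) (hC : B ⊓ D ≤ C) :
    A ⊓ C = B ⊓ D ∧ A ⊓ D = B ⊓ D ∧ B ⊓ C = B ⊓ D :=
  ⟨le_antisymm (inf_le_inf hAB hCD) (le_inf hA hC),
    le_antisymm (inf_le_inf_right _ hAB) (le_inf hA inf_le_right),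
    le_antisymm (inf_le_inf_left _ hCD) (le_inf inf_le_left hC)⟩

theorem hibiPoly_mul_eq_of_twoTwo (hc : IsCompatible R m)
    (hkb : IsKhovanskiiBasis m (Algebra.adjoin R (hibiSet R σ)) (hibiSet R σ))
    (hAC : A ⊓ C = Z) (hAD : A ⊓ D = Z) (hBC : B ⊓ C = Z) (hBD : B ⊓ D = Z) :
    hibiPoly R A C * hibiPoly R B D = hibiPoly R A D * hibiPoly R B C := by
  have hZA : Z ≤ A := hAC ▸ inf_le_left
  have hZC : Z ≤ C := hAC ▸ inf_le_right
  have hZB : Z ≤ B := hBD ▸ inf_le_left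
  have hZD : Z ≤ D := hBD ▸ inf_le_right
  refine hibiPoly_mul_eq_of_notMem hc hkb (by simp only [pairExp]; abel) ?_ ?_ ?_ ?_ ?_ ?_
  all_goals
    simp only [hAC, hAD, hBC, hBD]
    refine pairExp_add_pairExp_notMem_of_le (z := Z) (by simp) ?_ ?_ ?_ ?_ <;>
      first | exact le_rfl | assumption | exact le_sup_of_le_left ‹_›

theorem hibiPoly_mul_ne_of_twoTwo (hAB : A < B) (hCD : C < D) (hAC : ¬ A ≤ C) (hCA : ¬ C ≤ A)
    (hZ_AC : A ⊓ C = Z) (hZ_AD : A ⊓ D = Z) (hZ_BC : B ⊓ C = Z) (hZ_BD : B ⊓ D = Z) :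
    hibiPoly R A C * hibiPoly R B D ≠ hibiPoly R A D * hibiPoly R B C := by
  classical
  have hZA_le : Z ≤ A := hZ_AC ▸ inf_le_left
  have hZC_le : Z ≤ C := hZ_AC ▸ inf_le_right
  have hZA : Z ≠ A := fun h => hAC (h ▸ hZC_le)
  have hZC : Z ≠ C := fun h => hCA (h ▸ hZA_le)
  have hZB : Z ≠ B := fun h => hAB.not_ge (h ▸ hZA_le)
  have hZD : Z ≠ D := fun h => hCD.not_ge (h ▸ hZC_le)
  have hA_AC : A ≠ A ⊔ C := fun h => hCA (le_sup_right.trans h.ge)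
  have hA_AD : A ≠ A ⊔ D := fun h => hCA (hCD.le.trans (le_sup_right.trans h.ge))
  have hA_D : A ≠ D := fun h => hCA (h ▸ hCD.le)
  have hA_BC : A ≠ B ⊔ C := fun h => hAB.not_ge (le_sup_left.trans h.ge)
  have hA_BD : A ≠ B ⊔ D := fun h => hAB.not_ge (le_sup_left.trans h.ge)
  have hC_BC : C ≠ B ⊔ C := fun h =>
    hAB.not_ge ((hZ_BD ▸ le_inf le_rfl ((le_sup_left.trans h.ge).trans hCD.le)).trans hZA_le)
  -- `x_A x_C x_Z x_{B ⊔ D}` is a term of the left product only, with coefficient `-1`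
  set w := pairExp A C + pairExp Z (B ⊔ D)
  have h₀ : pairExp A C + pairExp B D ≠ w :=
    pairExp_add_pairExp_ne (t := Z) ⟨hZA, hZC, hZB, hZD⟩ (by simp)
  have h₂ : pairExp Z (A ⊔ C) + pairExp B D ≠ w :=
    pairExp_add_pairExp_ne (t := A) ⟨hZA.symm, hA_AC, hAB.ne, hA_D⟩ (by simp)
  have h₃ : pairExp Z (A ⊔ C) + pairExp Z (B ⊔ D) ≠ w :=
    pairExp_add_pairExp_ne (t := A) ⟨hZA.symm, hA_AC, hZA.symm, hA_BD⟩ (by simp)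
  have h₄ : pairExp A D + pairExp Z (B ⊔ C) ≠ w :=
    pairExp_add_pairExp_ne (t := C) ⟨fun h => hCA h.le, hCD.ne, hZC.symm, hC_BC⟩ (by simp)
  have h₅ : pairExp Z (A ⊔ D) + pairExp B C ≠ w :=
    pairExp_add_pairExp_ne (t := A) ⟨hZA.symm, hA_AD, hAB.ne, fun h => hAC h.le⟩ (by simp)
  have h₆ : pairExp Z (A ⊔ D) + pairExp Z (B ⊔ C) ≠ w :=
    pairExp_add_pairExp_ne (t := A) ⟨hZA.symm, hA_AD, hZA.symm, hA_BC⟩ (by simp)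
  intro hprod
  have hw := congrArg (coeff w) hprod
  rw [hibiPoly_mul_hibiPoly, hibiPoly_mul_hibiPoly, hZ_AC, hZ_AD, hZ_BC, hZ_BD,
    show pairExp A D + pairExp B C = pairExp A C + pairExp B D by simp only [pairExp]; abel] at hw
  simp only [coeff_sub, coeff_add, coeff_monomial, if_neg h₀, if_neg h₂,
    if_neg h₃, if_neg h₄, if_neg h₅, if_neg h₆] at hw
  simp [w] at hw

theorem false_of_twoTwo (hc : IsCompatible R m)
    (hkb : IsKhovanskiiBasis m (Algebra.adjoin R (hibiSet R σ)) (hibiSet R σ))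
    (hAB : A < B) (hCD : C < D) (hA : B ⊓ D ≤ A) (hC : B ⊓ D ≤ C)
    (hAC : ¬ A ≤ C) (hCA : ¬ C ≤ A) : False := by
  obtain ⟨hZ_AC, hZ_AD, hZ_BC⟩ := inf_eq_of_twoTwo hAB.le hCD.le hA hC
  exact hibiPoly_mul_ne_of_twoTwo hAB hCD hAC hCA hZ_AC hZ_AD hZ_BC rfl
    (hibiPoly_mul_eq_of_twoTwo hc hkb hZ_AC hZ_AD hZ_BC rfl)

end TwoTwo

section ThreeAntichain

variable [DistribLattice σ] {A B C Z : σ}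

lemma inf_sup_eq_of_pairwise_inf_eq (hAB : A ⊓ B = Z) (hAC : A ⊓ C = Z) (hBC : B ⊓ C = Z) :
    (A ⊔ C) ⊓ (B ⊔ C) = C ∧ A ⊓ (B ⊔ C) = Z ∧ B ⊓ (A ⊔ C) = Z := by
  refine ⟨?_, ?_, ?_⟩
  · rw [← sup_inf_right, hAB, sup_eq_right, ← hAC]; exact inf_le_right
  · rw [inf_sup_left, hAB, hAC, sup_idem]
  · rw [inf_sup_left, inf_comm, hAB, hBC, sup_idem]

theorem hibiPoly_mul_eq_of_threeAntichain (hc : IsCompatible R m)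
    (hkb : IsKhovanskiiBasis m (Algebra.adjoin R (hibiSet R σ)) (hibiSet R σ))
    (hAB : A ⊓ B = Z) (hAC : A ⊓ C = Z) (hBC : B ⊓ C = Z) :
    hibiPoly R A B * hibiPoly R (A ⊔ C) (B ⊔ C) =
      hibiPoly R A (B ⊔ C) * hibiPoly R B (A ⊔ C) := by
  obtain ⟨hC_AC_BC, hZ_A_BC, hZ_B_AC⟩ := inf_sup_eq_of_pairwise_inf_eq hAB hAC hBC
  have hZA : Z ≤ A := hAB ▸ inf_le_left
  have hZB : Z ≤ B := hAB ▸ inf_le_right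
  have hZC : Z ≤ C := hAC ▸ inf_le_right
  refine hibiPoly_mul_eq_of_notMem hc hkb (by simp only [pairExp]; abel) ?_ ?_ ?_ ?_ ?_ ?_
  · rw [hC_AC_BC]
    exact pairExp_add_pairExp_notMem_of_ge (by simp) (le_sup_of_le_left le_sup_left)
      (le_sup_of_le_right le_sup_left) (le_sup_of_le_left le_sup_right) le_rfl
  all_goals
    simp only [hAB, hC_AC_BC, hZ_A_BC, hZ_B_AC]
    refine pairExp_add_pairExp_notMem_of_le (z := Z) (by simp) ?_ ?_ ?_ ?_ <;>
      first
      | exact le_rfl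
      | assumption
      | exact le_sup_of_le_left ‹_›
      | exact le_sup_of_le_left (le_sup_of_le_left ‹_›)

theorem hibiPoly_mul_ne_of_threeAntichain (hAB : A ⊓ B = Z) (hAC : A ⊓ C = Z) (hBC : B ⊓ C = Z)
    (hA : ¬ A ≤ Z) (hB : ¬ B ≤ Z) (hC : ¬ C ≤ Z) :
    hibiPoly R A B * hibiPoly R (A ⊔ C) (B ⊔ C) ≠
      hibiPoly R A (B ⊔ C) * hibiPoly R B (A ⊔ C) := by
  classical
  obtain ⟨hC_AC_BC, hZ_A_BC, hZ_B_AC⟩ := inf_sup_eq_of_pairwise_inf_eq hAB hAC hBC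
  have hZ : Z ≠ A ∧ Z ≠ B ∧ Z ≠ C ∧ Z ≠ (A ⊔ C) ⊔ (B ⊔ C) :=
    ⟨fun h => hA h.ge, fun h => hB h.ge, fun h => hC h.ge,
      fun h => hA ((le_sup_of_le_left le_sup_left).trans h.ge)⟩
  have hC' : C ≠ A ∧ C ≠ B ∧ C ≠ A ⊔ C ∧ C ≠ B ⊔ C :=
    ⟨fun h => hC (hAC ▸ le_inf h.le le_rfl), fun h => hC (hBC ▸ le_inf h.le le_rfl),
      fun h => hA (hAC ▸ le_inf le_rfl (le_sup_left.trans h.ge)),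
      fun h => hB (hBC ▸ le_inf le_rfl (le_sup_left.trans h.ge))⟩
  -- the only term of the two products not divisible by `x_Z`, other than their common leading term
  set w := pairExp A B + pairExp C ((A ⊔ C) ⊔ (B ⊔ C))
  have h₀ : pairExp A B + pairExp (A ⊔ C) (B ⊔ C) ≠ w := pairExp_add_pairExp_ne hC' (by simp)
  have h₂ : pairExp Z (A ⊔ B) + pairExp (A ⊔ C) (B ⊔ C) ≠ w :=
    (pairExp_add_pairExp_ne hZ (by simp)).symm
  have h₃ : pairExp Z (A ⊔ B) + pairExp C ((A ⊔ C) ⊔ (B ⊔ C)) ≠ w :=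
    (pairExp_add_pairExp_ne hZ (by simp)).symm
  have h₄ : pairExp A (B ⊔ C) + pairExp Z (B ⊔ (A ⊔ C)) ≠ w :=
    (pairExp_add_pairExp_ne hZ (by simp)).symm
  have h₅ : pairExp Z (A ⊔ (B ⊔ C)) + pairExp B (A ⊔ C) ≠ w :=
    (pairExp_add_pairExp_ne hZ (by simp)).symm
  have h₆ : pairExp Z (A ⊔ (B ⊔ C)) + pairExp Z (B ⊔ (A ⊔ C)) ≠ w :=
    (pairExp_add_pairExp_ne hZ (by simp)).symm
  intro hprod
  have hw := congrArg (coeff w) hprod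
  rw [hibiPoly_mul_hibiPoly, hibiPoly_mul_hibiPoly, hAB, hC_AC_BC, hZ_A_BC, hZ_B_AC,
    show pairExp A (B ⊔ C) + pairExp B (A ⊔ C) = pairExp A B + pairExp (A ⊔ C) (B ⊔ C) by
      simp only [pairExp]; abel] at hw
  simp only [coeff_sub, coeff_add, coeff_monomial, if_neg h₀, if_neg h₂, if_neg h₃, if_neg h₄,
    if_neg h₅, if_neg h₆] at hw
  simp [w] at hw

end ThreeAntichain

end Configurations

section Posets

open LowerSet

variable {P R : Type*} [PartialOrder P] [Field R] {m : MonomialOrder (LowerSet P)}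

theorem twoTwoFree_of_isKhovanskiiBasis (hc : IsCompatible R m)
    (hkb : IsKhovanskiiBasis m (Algebra.adjoin R (hibiSet R (LowerSet P)))
      (hibiSet R (LowerSet P))) :
    TwoTwoFree P := by
  rintro ⟨a, b, c, d, hab, hcd, -, -, -, -, hac, hca, had, -, -, hcb, hbd, hdb⟩
  refine false_of_twoTwo hc hkb (A := Iic a ⊔ (Iic b ⊓ Iic d)) (B := Iic b)
    (C := Iic c ⊔ (Iic b ⊓ Iic d)) (D := Iic d) ?_ ?_ le_sup_right le_sup_right ?_ ?_
  · exact lt_of_le_not_ge (sup_le (Iic_le.2 hab.le) inf_le_left) (by simp [hab.not_ge, hbd])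
  · exact lt_of_le_not_ge (sup_le (Iic_le.2 hcd.le) inf_le_right) (by simp [hcd.not_ge, hdb])
  · simp [hac, had]
  · simp [hca, hcb]

theorem oneOneOneFree_of_isKhovanskiiBasis (hc : IsCompatible R m)
    (hkb : IsKhovanskiiBasis m (Algebra.adjoin R (hibiSet R (LowerSet P)))
      (hibiSet R (LowerSet P))) :
    OneOneOneFree P := by
  rintro ⟨a, b, c, -, -, -, hab, hba, hac, hca, hbc, hcb⟩
  set Z := Iic a ⊓ Iic b ⊔ Iic a ⊓ Iic c ⊔ Iic b ⊓ Iic c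
  have hAB : (Iic a ⊔ Z) ⊓ (Iic b ⊔ Z) = Z := by
    rw [← sup_inf_right, sup_eq_right]; exact le_sup_left.trans le_sup_left
  have hAC : (Iic a ⊔ Z) ⊓ (Iic c ⊔ Z) = Z := by
    rw [← sup_inf_right, sup_eq_right]; exact le_sup_right.trans le_sup_left
  have hBC : (Iic b ⊔ Z) ⊓ (Iic c ⊔ Z) = Z := by
    rw [← sup_inf_right, sup_eq_right]; exact le_sup_right
  exact hibiPoly_mul_ne_of_threeAntichain (R := R) hAB hAC hBC (by simp [Z, hab, hac])
    (by simp [Z, hba, hbc]) (by simp [Z, hca, hcb])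
    (hibiPoly_mul_eq_of_threeAntichain hc hkb hAB hAC hBC)

end Posets

end Hibi

theorem statement0_general {P : Type*} [PartialOrder P] (k : Type*) [Field k]
    (h : ∃ m : MonomialOrder (LowerSet P), IsCompatible k m ∧
      IsKhovanskiiBasis m (Algebra.adjoin k (hibiSet k (LowerSet P)))
        (hibiSet k (LowerSet P))) :
    TwoTwoFree P ∧ OneOneOneFree P := by
  obtain ⟨m, hc, hkb⟩ := h
  exact ⟨Hibi.twoTwoFree_of_isKhovanskiiBasis hc hkb,
    Hibi.oneOneOneFree_of_isKhovanskiiBasis hc hkb⟩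

/-- If for a finite poset `P` that is irreducible with respect to ordinal sum there exists a
compatible monomial order for which `F_{L(P)}` is a Khovanskii basis of `R(L(P))`, then `P`
is `(2+2)`-free and `(1+1+1)`-free. -/
theorem statement0 {P : Type*} [PartialOrder P] [Fintype P]
    (hirr : OrdinalSumIrreducible P) (k : Type*) [Field k]
    (h : ∃ m : MonomialOrder (LowerSet P), IsCompatible k m ∧
      IsKhovanskiiBasis m (Algebra.adjoin k (hibiSet k (LowerSet P)))
        (hibiSet k (LowerSet P))) :
    TwoTwoFree P ∧ OneOneOneFree P :=
  statement0_general k h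
end

section
/- Let P be a finite poset, k a field, and ⪯ a compatible monomial order on S = k[x_α : α ∈ L(P)]. Let L' ⊆ L(P) be a sublattice, i.e., a subset closed under intersection and union. If F_{L(P)} forms a Khovanskii basis of R(L(P)) with respect to ⪯, then F_{L'} := {f_{α,β} : α,β ∈ L' incomparable} forms a Khovanskii basis of R(L') := k[F_{L'}] with respect to ⪯. -/
open MvPolynomial

/-- The set `F_{L'} = {f_{α,β} : α, β ∈ L' incomparable}` for a subset `L'` of a lattice. -/
def hibiSetOn (k : Type*) [Field k] {σ : Type*} [Lattice σ] (L' : Set σ) :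
    Set (MvPolynomial σ k) :=
  {g | ∃ α ∈ L', ∃ β ∈ L', ¬ α ≤ β ∧ ¬ β ≤ α ∧ g = hibiPoly k α β}

/-!
The leading monomial of an element of `R(L')` only involves variables from `L'`, and by
hypothesis it is a polynomial in the products `x_α x_β` of incomparable `α, β ∈ L(P)`.
Killing the variables outside `L'` fixes it, sends each such product either to itself, when
`α, β ∈ L'`, or to `0`, and so writes it as a polynomial in the leading terms `x_α x_β` of
`F_{L'}`.
-/

namespace MvPolynomial

variable {σ R : Type*} [CommSemiring R] {s : Set σ}

theorem monomial_coeff_mem_supported {f : MvPolynomial σ R} (hf : f ∈ supported R s)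
    (d : σ →₀ ℕ) : monomial d (f.coeff d) ∈ supported R s := by
  by_cases hd : f.coeff d = 0
  · rw [hd, monomial_zero]
    exact zero_mem _
  · rw [mem_supported] at hf ⊢
    rw [vars_monomial hd]
    intro i hi
    exact hf ((mem_vars_iff_mem_support i).mpr ⟨d, mem_support_iff.mpr hd, hi⟩)

variable (R s) in
noncomputable def supportedRetraction : MvPolynomial σ R →ₐ[R] MvPolynomial σ R :=
  aeval (s.indicator X)

theorem supportedRetraction_X_of_mem {i : σ} (hi : i ∈ s) :
    supportedRetraction R s (X i) = X i := by
  rw [supportedRetraction, aeval_X, Set.indicator_of_mem hi]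

theorem supportedRetraction_X_of_notMem {i : σ} (hi : i ∉ s) :
    supportedRetraction R s (X i) = 0 := by
  rw [supportedRetraction, aeval_X, Set.indicator_of_notMem hi]

theorem supportedRetraction_of_mem_supported {f : MvPolynomial σ R} (hf : f ∈ supported R s) :
    supportedRetraction R s f = f := by
  refine AlgHom.adjoin_le_equalizer (supportedRetraction R s) (AlgHom.id R _) ?_ hf
  rintro _ ⟨i, hi, rfl⟩
  exact supportedRetraction_X_of_mem hi

end MvPolynomial

theorem MonomialOrder.leadingTerm'_mem_supported {σ R : Type*} [CommSemiring R]
    (m : MonomialOrder σ) {s : Set σ} {f : MvPolynomial σ R} (hf : f ∈ supported R s) :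
    m.leadingTerm' f ∈ supported R s :=
  monomial_coeff_mem_supported hf _

section Hibi

variable {k σ : Type*} [Field k] [Lattice σ]

variable (k) in
def incomparableProducts (L' : Set σ) : Set (MvPolynomial σ k) :=
  {g | ∃ α ∈ L', ∃ β ∈ L', ¬ α ≤ β ∧ ¬ β ≤ α ∧ g = X α * X β}

theorem hibiSetOn_univ : hibiSetOn k (Set.univ : Set σ) = hibiSet k σ := by
  ext g
  simp [hibiSetOn, hibiSet]

theorem hibiSetOn_mono {L₁ L₂ : Set σ} (h : L₁ ⊆ L₂) : hibiSetOn k L₁ ⊆ hibiSetOn k L₂ := by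
  rintro g ⟨α, hα, β, hβ, hαβ, hβα, rfl⟩
  exact ⟨α, h hα, β, h hβ, hαβ, hβα, rfl⟩

theorem adjoin_hibiSetOn_le_supported {L' : Set σ} (hsup : ∀ α ∈ L', ∀ β ∈ L', α ⊔ β ∈ L')
    (hinf : ∀ α ∈ L', ∀ β ∈ L', α ⊓ β ∈ L') :
    Algebra.adjoin k (hibiSetOn k L') ≤ supported k L' := by
  refine Algebra.adjoin_le ?_
  rintro _ ⟨α, hα, β, hβ, -, -, rfl⟩
  have hX : ∀ γ ∈ L', (X γ : MvPolynomial σ k) ∈ supported k L' := fun γ hγ =>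
    X_mem_supported.mpr hγ
  exact sub_mem (mul_mem (hX α hα) (hX β hβ))
    (mul_mem (hX _ (hinf α hα β hβ)) (hX _ (hsup α hα β hβ)))

theorem IsCompatible.image_leadingTerm'_hibiSetOn {m : MonomialOrder σ} (hm : IsCompatible k m)
    (L' : Set σ) :
    m.leadingTerm' '' {f ∈ hibiSetOn k L' | f ≠ 0} = incomparableProducts k L' := by
  ext g
  constructor
  · rintro ⟨_, ⟨⟨α, hα, β, hβ, hαβ, hβα, rfl⟩, -⟩, rfl⟩
    exact ⟨α, hα, β, hβ, hαβ, hβα, hm α β hαβ hβα⟩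
  · rintro ⟨α, hα, β, hβ, hαβ, hβα, rfl⟩
    have hne : hibiPoly k α β ≠ 0 := fun h0 => by
      have := hm α β hαβ hβα
      rw [h0, MonomialOrder.leadingTerm', coeff_zero, monomial_zero] at this
      exact mul_ne_zero (X_ne_zero α) (X_ne_zero β) this.symm
    exact ⟨_, ⟨⟨α, hα, β, hβ, hαβ, hβα, rfl⟩, hne⟩, hm α β hαβ hβα⟩

theorem map_supportedRetraction_adjoin_incomparableProducts (L' : Set σ) :
    (Algebra.adjoin k (incomparableProducts k (Set.univ : Set σ))).map
        (supportedRetraction k L') ≤ Algebra.adjoin k (incomparableProducts k L') := by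
  rw [AlgHom.map_adjoin]
  refine Algebra.adjoin_le ?_
  rintro _ ⟨_, ⟨α, -, β, -, hαβ, hβα, rfl⟩, rfl⟩
  by_cases hα : α ∈ L'
  · by_cases hβ : β ∈ L'
    · rw [map_mul, supportedRetraction_X_of_mem hα, supportedRetraction_X_of_mem hβ]
      exact Algebra.subset_adjoin ⟨α, hα, β, hβ, hαβ, hβα, rfl⟩
    · rw [map_mul, supportedRetraction_X_of_notMem hβ, mul_zero]
      exact zero_mem _
  · rw [map_mul, supportedRetraction_X_of_notMem hα, zero_mul]
    exact zero_mem _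

end Hibi

theorem statement2_general {P : Type*} [PartialOrder P] (k : Type*) [Field k]
    (m : MonomialOrder (LowerSet P)) (hm : IsCompatible k m)
    (L' : Set (LowerSet P))
    (hsup : ∀ α ∈ L', ∀ β ∈ L', α ⊔ β ∈ L')
    (hinf : ∀ α ∈ L', ∀ β ∈ L', α ⊓ β ∈ L')
    (h : IsKhovanskiiBasis m (Algebra.adjoin k (hibiSet k (LowerSet P)))
      (hibiSet k (LowerSet P))) :
    IsKhovanskiiBasis m (Algebra.adjoin k (hibiSetOn k L')) (hibiSetOn k L') := by
  rw [← hibiSetOn_univ] at h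
  refine ⟨Algebra.subset_adjoin, le_antisymm ?_ ?_⟩
  · exact Algebra.adjoin_mono (Set.image_mono fun f hf => ⟨Algebra.subset_adjoin hf.1, hf.2⟩)
  · rw [hm.image_leadingTerm'_hibiSetOn]
    refine Algebra.adjoin_le ?_
    rintro _ ⟨f, ⟨hfR, hf0⟩, rfl⟩
    have hLT_supported : m.leadingTerm' f ∈ supported k L' :=
      m.leadingTerm'_mem_supported (adjoin_hibiSetOn_le_supported hsup hinf hfR)
    have hLT_initial : m.leadingTerm' f ∈ Algebra.adjoin k (incomparableProducts k Set.univ) := by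
      rw [← hm.image_leadingTerm'_hibiSetOn, h.2]
      exact Algebra.subset_adjoin
        ⟨f, ⟨Algebra.adjoin_mono (hibiSetOn_mono (Set.subset_univ L')) hfR, hf0⟩, rfl⟩
    rw [← supportedRetraction_of_mem_supported hLT_supported]
    exact map_supportedRetraction_adjoin_incomparableProducts L' ⟨_, hLT_initial, rfl⟩

/-- If `F_{L(P)}` is a Khovanskii basis of `R(L(P))` with respect to a compatible monomial
order, then for every sublattice `L' ⊆ L(P)`, the set `F_{L'}` is a Khovanskii basis of
`R(L') = k[F_{L'}]` with respect to the same order. -/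
theorem statement2 {P : Type*} [PartialOrder P] [Fintype P] (k : Type*) [Field k]
    (m : MonomialOrder (LowerSet P)) (hm : IsCompatible k m)
    (L' : Set (LowerSet P))
    (hsup : ∀ α ∈ L', ∀ β ∈ L', α ⊔ β ∈ L')
    (hinf : ∀ α ∈ L', ∀ β ∈ L', α ⊓ β ∈ L')
    (h : IsKhovanskiiBasis m (Algebra.adjoin k (hibiSet k (LowerSet P)))
      (hibiSet k (LowerSet P))) :
    IsKhovanskiiBasis m (Algebra.adjoin k (hibiSetOn k L')) (hibiSetOn k L') :=
  statement2_general k m hm L' hsup hinf h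
end

section
/- Let P be a finite poset with n ≥ 2 elements that is (2+2)-free, (1+1+1)-free, and irreducible with respect to ordinal sum. For x ∈ P let U(x) = {y ∈ P : y > x} denote the upset of x. Then P has exactly two maximal elements, and for any two distinct non-maximal elements x ≠ y one has U(x) ≠ U(y); consequently the set {U(x) : x ∈ P} has exactly n − 1 elements. -/
open Set

section

variable {P : Type*} [PartialOrder P]

theorem OneOneOneFree.eq_or_eq_of_isMax (h111 : OneOneOneFree P) {a b c : P} (ha : IsMax a)
    (hb : IsMax b) (hab : a ≠ b) (hc : IsMax c) : c = a ∨ c = b := by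
  have incomparable : ∀ {x y : P}, IsMax x → x ≠ y → ¬ x ≤ y := fun hx hxy hle =>
    hxy (hx.eq_of_le hle)
  by_contra! hca
  exact h111 ⟨a, b, c, hab, hca.1.symm, hca.2.symm, incomparable ha hab,
    incomparable hb hab.symm, incomparable ha hca.1.symm, incomparable hc hca.1,
    incomparable hb hca.2.symm, incomparable hc hca.2⟩

theorem not_le_of_Ioi_eq {x y : P} (h : Ioi x = Ioi y) (hxy : x ≠ y) : ¬ x ≤ y := fun hle =>
  lt_irrefl y (h ▸ hle.lt_of_ne hxy : y ∈ Ioi y)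

namespace OrdinalSumIrreducible

theorem eq_of_forall_le (hirr : OrdinalSumIrreducible P) {m : P} (hm : ∀ x, x ≤ m) (x : P) :
    x = m := by
  by_contra hxm
  exact hirr ⟨{m}ᶜ, {m}, ⟨x, hxm⟩, singleton_nonempty m, disjoint_compl_left,
    compl_union_self _, fun a ha _ hb => hb ▸ (hm a).lt_of_ne ha⟩

theorem exists_isMax_ne [Finite P] [Nontrivial P] (hirr : OrdinalSumIrreducible P) :
    ∃ m₁ m₂ : P, IsMax m₁ ∧ IsMax m₂ ∧ m₁ ≠ m₂ := by
  have exists_ge_isMax (x : P) : ∃ m, x ≤ m ∧ IsMax m := by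
    obtain ⟨m, hxm, hm⟩ := Finite.exists_le_maximal (p := fun _ : P => True) trivial
    exact ⟨m, hxm, fun y hy => hm.2 trivial hy⟩
  obtain ⟨m₁, -, h₁⟩ := exists_ge_isMax (Classical.arbitrary P)
  by_contra! hunique
  obtain ⟨x, hx⟩ := exists_ne m₁
  refine hx (hirr.eq_of_forall_le (fun y => ?_) x)
  obtain ⟨m, hym, hm⟩ := exists_ge_isMax y
  exact hym.trans_eq (hunique m m₁ hm h₁)

theorem exists_setOf_isMax_eq_pair [Finite P] [Nontrivial P] (hirr : OrdinalSumIrreducible P)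
    (h111 : OneOneOneFree P) : ∃ m₁ m₂ : P, m₁ ≠ m₂ ∧ {x : P | IsMax x} = {m₁, m₂} := by
  obtain ⟨m₁, m₂, h₁, h₂, hne⟩ := hirr.exists_isMax_ne
  refine ⟨m₁, m₂, hne, Set.ext fun m => ⟨h111.eq_or_eq_of_isMax h₁ h₂ hne, ?_⟩⟩
  rintro (rfl | rfl) <;> assumption

-- If `x ≠ y` share their upset, every `a` outside it lies below `x` or `y` (else `{x, y, a}` is
-- an antichain), hence below the whole upset: `P` splits off that upset as an ordinal summand.
theorem Ioi_injOn (hirr : OrdinalSumIrreducible P) (h111 : OneOneOneFree P) :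
    InjOn Ioi {x : P | ¬ IsMax x} := by
  intro x hx y _ hU
  by_contra hxy
  have hxy' : ¬ x ≤ y := not_le_of_Ioi_eq hU hxy
  have hyx' : ¬ y ≤ x := not_le_of_Ioi_eq hU.symm (Ne.symm hxy)
  have below (a : P) (ha : a ∉ Ioi x) : a ≤ x ∨ a ≤ y := by
    by_contra! h
    have hxa : ¬ x ≤ a := fun hle => ha (hle.lt_of_ne fun e => h.1 (e ▸ le_rfl))
    have hya : ¬ y ≤ a := fun hle => ha (hU ▸ hle.lt_of_ne fun e => h.2 (e ▸ le_rfl))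
    exact h111 ⟨x, y, a, hxy, ne_of_not_le hxa, ne_of_not_le hya, hxy', hyx', hxa, h.1, hya, h.2⟩
  refine hirr ⟨(Ioi x)ᶜ, Ioi x, ⟨x, lt_irrefl x⟩, Set.Ioi_nonempty.2 hx, disjoint_compl_left,
    compl_union_self _, fun a ha c hc => ?_⟩
  rcases below a ha with hax | hay
  · exact hax.trans_lt hc
  · exact hay.trans_lt (hU ▸ hc : c ∈ Ioi y)

end OrdinalSumIrreducible

theorem ncard_range_Ioi [Finite P] {m₁ m₂ : P} (hne : m₁ ≠ m₂)
    (hmax : {x : P | IsMax x} = {m₁, m₂}) (hinj : InjOn Ioi {x : P | ¬ IsMax x}) :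
    (range (Ioi : P → Set P)).ncard = Nat.card P - 1 := by
  have h₁ : IsMax m₁ := (hmax.symm ▸ mem_insert m₁ {m₂} : m₁ ∈ {x : P | IsMax x})
  have h₂ : IsMax m₂ := (hmax.symm ▸ mem_insert_of_mem m₁ rfl : m₂ ∈ {x : P | IsMax x})
  -- `Ioi m₂ = ∅ = Ioi m₁`, so dropping `m₂` keeps the range and makes `Ioi` injective.
  have hrange : range (Ioi : P → Set P) = Ioi '' {m₂}ᶜ := by
    refine Subset.antisymm ?_ (image_subset_range _ _)
    rintro _ ⟨x, rfl⟩
    by_cases hx : x = m₂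
    · refine ⟨m₁, hne, ?_⟩
      rw [hx, Ioi_eq_empty_iff.2 h₁, Ioi_eq_empty_iff.2 h₂]
    · exact ⟨x, hx, rfl⟩
  have hinj' : InjOn Ioi ({m₂}ᶜ : Set P) := by
    intro x hx y hy hxy
    have hmax_iff : IsMax x ↔ IsMax y := by rw [← Ioi_eq_empty_iff, hxy, Ioi_eq_empty_iff]
    by_cases hxm : IsMax x
    · have hx' : x ∈ ({m₁, m₂} : Set P) := hmax ▸ hxm
      have hy' : y ∈ ({m₁, m₂} : Set P) := hmax ▸ hmax_iff.1 hxm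
      simp_all
    · exact hinj hxm (hmax_iff.not.1 hxm) hxy
  rw [hrange, hinj'.ncard_image, ncard_compl, ncard_singleton]

end

theorem statement9_general {P : Type*} [PartialOrder P] [Fintype P]
    (hn : 2 ≤ Fintype.card P)
    (h111 : OneOneOneFree P) (hirr : OrdinalSumIrreducible P) :
    Nat.card {x : P // IsMax x} = 2 ∧
    (∀ x y : P, ¬ IsMax x → ¬ IsMax y → x ≠ y → {z : P | x < z} ≠ {z : P | y < z}) ∧
    Nat.card {s : Set P // ∃ x : P, s = {z : P | x < z}} = Fintype.card P - 1 := by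
  have : Nontrivial P := Fintype.one_lt_card_iff_nontrivial.1 hn
  obtain ⟨m₁, m₂, hne, hmax⟩ := hirr.exists_setOf_isMax_eq_pair h111
  have hinj := hirr.Ioi_injOn h111
  refine ⟨?_, fun x y hx hy hxy hU => hxy (hinj hx hy hU), ?_⟩
  · change Nat.card {x : P | IsMax x} = 2
    rw [Nat.card_coe_set_eq, hmax, ncard_pair hne]
  · have hrange : {s : Set P | ∃ x : P, s = Ioi x} = range Ioi := by
      simp only [range, eq_comm]
    change Nat.card {s : Set P | ∃ x : P, s = Ioi x} = _
    rw [Nat.card_coe_set_eq, hrange, ncard_range_Ioi hne hmax hinj, Nat.card_eq_fintype_card]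

/-- A finite `{(2+2),(1+1+1)}`-free poset with `n ≥ 2` elements that is irreducible with
respect to ordinal sum has exactly two maximal elements, distinct non-maximal elements have
distinct upsets `U(x) = {y : y > x}`, and the set of upsets has exactly `n − 1` elements. -/
theorem statement9 {P : Type*} [PartialOrder P] [Fintype P]
    (hn : 2 ≤ Fintype.card P)
    (h22 : TwoTwoFree P) (h111 : OneOneOneFree P) (hirr : OrdinalSumIrreducible P) :
    Nat.card {x : P // IsMax x} = 2 ∧
    (∀ x y : P, ¬ IsMax x → ¬ IsMax y → x ≠ y → {z : P | x < z} ≠ {z : P | y < z}) ∧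
    Nat.card {s : Set P // ∃ x : P, s = {z : P | x < z}} = Fintype.card P - 1 :=
  statement9_general hn h111 hirr
end

section
/- Let P be a finite (1+1+1)-free poset with at least 2 elements that is irreducible with respect to ordinal sum. Then P can be partitioned into two disjoint nonempty chains; in particular the width of P is exactly 2. -/
/-! Galvin's proof of Dilworth's theorem for width two. By induction, cover a finite set `s`
minus a maximal element `a` by two chains `C, D`, and let `x, y` be the largest elements of `C`
and of `D` that are incomparable to something in the other chain. Then `x` and `y` are
incomparable, so by `(1+1+1)`-freeness one of them, say `x`, lies below `a`; the chains
`{u ∈ C | u ≤ x} ∪ {a}` and `D ∪ {u ∈ C | ¬ u ≤ x}` cover `s`. Irreducibility rules out that `P`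
is a chain, which forces both chains to be nonempty. -/

open Set

section

variable {P : Type*} [PartialOrder P]

theorem OneOneOneFree.not_incompRel {a b c : P} (h : OneOneOneFree P)
    (hab : IncompRel (· ≤ ·) a b) (hac : IncompRel (· ≤ ·) a c) :
    ¬ IncompRel (· ≤ ·) b c := fun hbc =>
  h ⟨a, b, c, hab.ne, hac.ne, hbc.ne, hab.1, hab.2, hac.1, hac.2, hbc.1, hbc.2⟩

theorem OneOneOneFree.ncard_le_two (h : OneOneOneFree P) {s : Set P}
    (hs : IsAntichain (· ≤ ·) s) : s.ncard ≤ 2 := by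
  by_contra! h3
  obtain ⟨a, b, c, ha, hb, hc, hab, hac, hbc⟩ :=
    (two_lt_ncard_iff (finite_of_ncard_pos (by omega))).1 h3
  exact h.not_incompRel ⟨hs ha hb hab, hs hb ha hab.symm⟩ ⟨hs ha hc hac, hs hc ha hac.symm⟩
    ⟨hs hb hc hbc, hs hc hb hbc.symm⟩

theorem IsChain.le_of_maximal {C B : Set P} (hC : IsChain (· ≤ ·) C) (hBC : B ⊆ C) {x z : P}
    (hx : Maximal (· ∈ B) x) (hz : z ∈ B) : z ≤ x :=
  (hC.total (hBC hz) (hBC hx.1)).elim id (hx.2 hz)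

def incompWith (C D : Set P) : Set P :=
  {u ∈ C | ∃ v ∈ D, IncompRel (· ≤ ·) u v}

theorem incompWith_subset (C D : Set P) : incompWith C D ⊆ C :=
  sep_subset _ _

theorem not_le_of_forall_incompWith_le {C D : Set P} {x y : P}
    (hx : ∀ u ∈ incompWith C D, u ≤ x) (hy : y ∈ incompWith D C) : ¬ x ≤ y := by
  obtain ⟨hyD, u, huC, hyu⟩ := hy
  exact fun hxy => hyu.2 ((hx u ⟨huC, y, hyD, hyu.symm⟩).trans hxy)

theorem exists_isChain_cover_insert_of_le {C D : Set P} (hC : IsChain (· ≤ ·) C)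
    (hD : IsChain (· ≤ ·) D) {a x : P} (hxa : x ≤ a) (hx : ∀ u ∈ incompWith C D, u ≤ x) :
    ∃ C' D' : Set P, IsChain (· ≤ ·) C' ∧ IsChain (· ≤ ·) D' ∧ C' ∪ D' = insert a (C ∪ D) := by
  refine ⟨insert a {u ∈ C | u ≤ x}, D ∪ {u ∈ C | ¬ u ≤ x}, ?_, ?_, ?_⟩
  · exact (hC.mono (sep_subset _ _)).insert fun u hu _ => .inr (hu.2.trans hxa)
  · refine isChain_union.2 ⟨hD, hC.mono (sep_subset _ _), fun v hv u hu _ => ?_⟩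
    by_contra! hvu
    exact hu.2 (hx u ⟨hu.1, v, hv, hvu.2, hvu.1⟩)
  · ext z
    simp only [mem_union, mem_insert_iff, mem_ofPred_eq]
    tauto

theorem OneOneOneFree.exists_isChain_cover_insert (h : OneOneOneFree P) {C D : Set P}
    (hC : IsChain (· ≤ ·) C) (hD : IsChain (· ≤ ·) D) (hCfin : C.Finite) (hDfin : D.Finite)
    {a : P} (ha : ∀ x ∈ C ∪ D, ¬ a ≤ x) :
    ∃ C' D' : Set P, IsChain (· ≤ ·) C' ∧ IsChain (· ≤ ·) D' ∧ C' ∪ D' = insert a (C ∪ D) := by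
  rcases (incompWith C D).eq_empty_or_nonempty with hCD | ⟨u, hu, v, hv, huv⟩
  · refine ⟨C ∪ D, {a}, isChain_union.2 ⟨hC, hD, fun u hu v hv _ => ?_⟩, .singleton,
      union_singleton⟩
    by_contra! huv
    exact (eq_empty_iff_forall_notMem.1 hCD) u ⟨hu, v, hv, huv.1, huv.2⟩
  obtain ⟨x, hx⟩ := (hCfin.subset (incompWith_subset C D)).exists_maximal ⟨u, hu, v, hv, huv⟩
  obtain ⟨y, hy⟩ := (hDfin.subset (incompWith_subset D C)).exists_maximal ⟨v, hv, u, hu, huv.symm⟩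
  have hxle : ∀ z ∈ incompWith C D, z ≤ x := fun z => hC.le_of_maximal (incompWith_subset C D) hx
  have hyle : ∀ z ∈ incompWith D C, z ≤ y := fun z => hD.le_of_maximal (incompWith_subset D C) hy
  have hxy : IncompRel (· ≤ ·) x y :=
    ⟨not_le_of_forall_incompWith_le hxle hy.1, not_le_of_forall_incompWith_le hyle hx.1⟩
  have hxa_or_hya : x ≤ a ∨ y ≤ a := by
    by_contra! hxya
    exact h.not_incompRel ⟨ha x (.inl hx.1.1), hxya.1⟩ ⟨ha y (.inr hy.1.1), hxya.2⟩ hxy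
  rcases hxa_or_hya with hxa | hya
  · exact exists_isChain_cover_insert_of_le hC hD hxa hxle
  · rw [union_comm]
    exact exists_isChain_cover_insert_of_le hD hC hya hyle

theorem OneOneOneFree.exists_isChain_cover (h : OneOneOneFree P) {s : Set P} (hs : s.Finite) :
    ∃ C D : Set P, IsChain (· ≤ ·) C ∧ IsChain (· ≤ ·) D ∧ C ∪ D = s := by
  classical
  lift s to Finset P using hs
  induction s using Finset.strongInduction with
  | H s ih =>
  obtain rfl | hne := s.eq_empty_or_nonempty
  · exact ⟨∅, ∅, .empty, .empty, by simp⟩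
  obtain ⟨a, ha⟩ := s.exists_maximal hne
  obtain ⟨C, D, hC, hD, hCD⟩ := ih _ (s.erase_ssubset ha.1)
  have hfin : (C ∪ D).Finite := hCD ▸ Finset.finite_toSet _
  rw [← Finset.insert_erase ha.1, Finset.coe_insert, ← hCD]
  refine h.exists_isChain_cover_insert hC hD (hfin.subset subset_union_left)
    (hfin.subset subset_union_right) fun x hx hax => ?_
  rw [hCD, Finset.coe_erase, mem_sdiff, mem_singleton_iff] at hx
  exact hx.2 (le_antisymm (ha.2 hx.1 hax) hax)

theorem OneOneOneFree.exists_isChain_isChain_compl [Finite P] (h : OneOneOneFree P) :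
    ∃ A : Set P, IsChain (· ≤ ·) A ∧ IsChain (· ≤ ·) Aᶜ := by
  obtain ⟨C, D, hC, hD, hCD⟩ := h.exists_isChain_cover finite_univ
  exact ⟨C, hC, hD.mono fun z hz => (hCD.symm ▸ mem_univ z : z ∈ C ∪ D).resolve_left hz⟩

theorem OrdinalSumIrreducible.exists_incompRel [Finite P] [Nontrivial P]
    (h : OrdinalSumIrreducible P) : ∃ a b : P, IncompRel (· ≤ ·) a b := by
  by_contra! hcomp
  obtain ⟨m, hm⟩ := finite_univ.exists_minimal (univ_nonempty (α := P))
  refine h ⟨{m}, {m}ᶜ, singleton_nonempty m, exists_ne m, disjoint_compl_right,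
    union_compl_self _, ?_⟩
  intro x hx b hb
  rw [mem_singleton_iff.1 hx]
  have hmb : m ≤ b := by
    by_contra hmb
    exact hcomp m b ⟨hmb, fun hbm => hmb (hm.2 trivial hbm)⟩
  exact lt_of_le_of_ne hmb (Ne.symm hb)

end

/-- A finite `(1+1+1)`-free poset with at least two elements that is irreducible with respect
to ordinal sum can be partitioned into two disjoint nonempty chains; in particular its width
is exactly 2. -/
theorem statement10 {P : Type*} [PartialOrder P] [Fintype P]
    (hn : 2 ≤ Fintype.card P)
    (h111 : OneOneOneFree P) (hirr : OrdinalSumIrreducible P) :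
    (∃ A B : Set P, A.Nonempty ∧ B.Nonempty ∧ Disjoint A B ∧ A ∪ B = Set.univ ∧
      IsChain (· ≤ ·) A ∧ IsChain (· ≤ ·) B) ∧
    (∃ a b : P, ¬ a ≤ b ∧ ¬ b ≤ a) ∧
    (∀ s : Set P, IsAntichain (· ≤ ·) s → Nat.card s ≤ 2) := by
  have : Nontrivial P := Fintype.one_lt_card_iff_nontrivial.1 hn
  obtain ⟨a, b, hab⟩ := hirr.exists_incompRel
  obtain ⟨A, hA, hAc⟩ := h111.exists_isChain_isChain_compl
  have hne_univ : ∀ C : Set P, IsChain (· ≤ ·) C → C ≠ univ := fun C hC hCu =>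
    (hC.total (hCu ▸ mem_univ a) (hCu ▸ mem_univ b)).elim hab.1 hab.2
  refine ⟨⟨A, Aᶜ, ?_, nonempty_compl.2 (hne_univ A hA), disjoint_compl_right,
    union_compl_self A, hA, hAc⟩, ⟨a, b, hab⟩, fun s hs => h111.ncard_le_two hs⟩
  exact nonempty_iff_ne_empty.2 fun hA0 => hne_univ Aᶜ hAc (by rw [hA0, compl_empty])
end

section
/- Let P be a finite poset containing four distinct elements a,b,c,d with a < b and c < d such that each of a,b is incomparable with each of c,d (i.e., P contains (2+2) as a subposet). Then the lattice L(P) of lower sets of P contains a sublattice (a subset closed under union and intersection) that is isomorphic as a lattice to the product of two 3-element chains with componentwise order (the divisor lattice of 36). -/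
lemma chain3_sup {α : Type*} (s t : Set α) (h : s ⊆ t) (i j : Fin 3) :
    (![∅,s,t]) (i ⊔ j) = ![∅,s,t] i ∪ ![∅,s,t] j := by
  fin_cases i <;> fin_cases j <;>
    simp [Set.union_eq_self_of_subset_left, Set.union_eq_self_of_subset_right, h]

lemma chain3_inf {α : Type*} (s t : Set α) (h : s ⊆ t) (i j : Fin 3) :
    (![∅,s,t]) (i ⊓ j) = ![∅,s,t] i ∩ ![∅,s,t] j := by
  fin_cases i <;> fin_cases j <;>
    simp [Set.inter_eq_self_of_subset_left, Set.inter_eq_self_of_subset_right, h]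

lemma chain3_sub {α : Type*} (s t : Set α) (h : s ⊆ t) (i : Fin 3) :
    (![∅,s,t]) i ⊆ t := by
  fin_cases i <;> simp [h]

lemma chain3_lower {α : Type*} [Preorder α] (s t : Set α) (hs : IsLowerSet s)
    (ht : IsLowerSet t) (i : Fin 3) : IsLowerSet ((![∅,s,t]) i) := by
  fin_cases i
  · exact isLowerSet_empty
  · exact hs
  · exact ht

lemma inter_cross {α : Type*} (X1 X2 Y1 Y2 T U : Set α)
    (hX1 : X1 ⊆ T) (hX2 : X2 ⊆ T) (hY1 : Y1 ⊆ U) (hY2 : Y2 ⊆ U) :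
    (X1 ∪ Y1 ∪ T ∩ U) ∩ (X2 ∪ Y2 ∪ T ∩ U) = X1 ∩ X2 ∪ Y1 ∩ Y2 ∪ T ∩ U := by
  ext x
  have e1 := @hX1 x
  have e2 := @hX2 x
  have e3 := @hY1 x
  have e4 := @hY2 x
  simp only [Set.mem_union, Set.mem_inter_iff] at *
  tauto

set_option maxHeartbeats 1000000 in
/-- If a finite poset `P` contains `(2+2)` as a subposet, then the lattice of lower sets of
`P` contains a sublattice isomorphic to the product of two 3-element chains (the divisor
lattice of 36): there is an injection from `Fin 3 × Fin 3` (with componentwise order) into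
the lower sets of `P` turning joins into unions and meets into intersections. -/

theorem statement12 {P : Type*} [PartialOrder P] [Fintype P]
    (a b c d : P) (hab : a < b) (hcd : c < d)
    (h1 : ¬ a ≤ c) (h2 : ¬ c ≤ a) (h3 : ¬ a ≤ d) (h4 : ¬ d ≤ a)
    (h5 : ¬ b ≤ c) (h6 : ¬ c ≤ b) (h7 : ¬ b ≤ d) (h8 : ¬ d ≤ b) :
    ∃ f : Fin 3 × Fin 3 → Set P, Function.Injective f ∧ (∀ u, IsLowerSet (f u)) ∧
      (∀ u v, f (u ⊔ v) = f u ∪ f v) ∧ (∀ u v, f (u ⊓ v) = f u ∩ f v) := by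
  classical
  have hIab : Set.Iic a ⊆ Set.Iic b := Set.Iic_subset_Iic.2 hab.le
  have hIcd : Set.Iic c ⊆ Set.Iic d := Set.Iic_subset_Iic.2 hcd.le
  refine ⟨fun u => ![∅, Set.Iic a, Set.Iic b] u.1 ∪ ![∅, Set.Iic c, Set.Iic d] u.2 ∪
      (Set.Iic b ∩ Set.Iic d), ?_, ?_, ?_, ?_⟩
  · -- injectivity
    intro u v huv
    have huv' : ![∅, Set.Iic a, Set.Iic b] u.1 ∪ ![∅, Set.Iic c, Set.Iic d] u.2 ∪
        (Set.Iic b ∩ Set.Iic d) = ![∅, Set.Iic a, Set.Iic b] v.1 ∪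
        ![∅, Set.Iic c, Set.Iic d] v.2 ∪ (Set.Iic b ∩ Set.Iic d) := huv
    have mema : ∀ w : Fin 3 × Fin 3, a ∈ ![∅, Set.Iic a, Set.Iic b] w.1 ∪
        ![∅, Set.Iic c, Set.Iic d] w.2 ∪ (Set.Iic b ∩ Set.Iic d) ↔ w.1 ≠ 0 := by
      rintro ⟨i, j⟩
      fin_cases i <;> fin_cases j <;> simp_all [hab.le]
    have memb : ∀ w : Fin 3 × Fin 3, b ∈ ![∅, Set.Iic a, Set.Iic b] w.1 ∪
        ![∅, Set.Iic c, Set.Iic d] w.2 ∪ (Set.Iic b ∩ Set.Iic d) ↔ w.1 = 2 := by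
      rintro ⟨i, j⟩
      fin_cases i <;> fin_cases j <;> simp_all [hab.not_ge]
    have memc : ∀ w : Fin 3 × Fin 3, c ∈ ![∅, Set.Iic a, Set.Iic b] w.1 ∪
        ![∅, Set.Iic c, Set.Iic d] w.2 ∪ (Set.Iic b ∩ Set.Iic d) ↔ w.2 ≠ 0 := by
      rintro ⟨i, j⟩
      fin_cases i <;> fin_cases j <;> simp_all [hcd.le]
    have memd : ∀ w : Fin 3 × Fin 3, d ∈ ![∅, Set.Iic a, Set.Iic b] w.1 ∪
        ![∅, Set.Iic c, Set.Iic d] w.2 ∪ (Set.Iic b ∩ Set.Iic d) ↔ w.2 = 2 := by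
      rintro ⟨i, j⟩
      fin_cases i <;> fin_cases j <;> simp_all [hcd.not_ge]
    have ea : (u.1 ≠ 0) ↔ (v.1 ≠ 0) := by rw [← mema u, ← mema v, huv']
    have eb : (u.1 = 2) ↔ (v.1 = 2) := by rw [← memb u, ← memb v, huv']
    have ec : (u.2 ≠ 0) ↔ (v.2 ≠ 0) := by rw [← memc u, ← memc v, huv']
    have ed : (u.2 = 2) ↔ (v.2 = 2) := by rw [← memd u, ← memd v, huv']
    obtain ⟨i, j⟩ := u; obtain ⟨i', j'⟩ := v
    simp only at ea eb ec ed
    have e1 : i = i' := by fin_cases i <;> fin_cases i' <;> simp_all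
    have e2 : j = j' := by fin_cases j <;> fin_cases j' <;> simp_all
    simp [e1, e2]
  · -- lower sets
    rintro ⟨i, j⟩
    exact ((chain3_lower _ _ (isLowerSet_Iic a) (isLowerSet_Iic b) i).union
      (chain3_lower _ _ (isLowerSet_Iic c) (isLowerSet_Iic d) j)).union
      ((isLowerSet_Iic b).inter (isLowerSet_Iic d))
  · -- sup
    rintro ⟨i, j⟩ ⟨i', j'⟩
    show ![∅, Set.Iic a, Set.Iic b] (i ⊔ i') ∪ ![∅, Set.Iic c, Set.Iic d] (j ⊔ j') ∪
      (Set.Iic b ∩ Set.Iic d) = _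
    rw [chain3_sup _ _ hIab, chain3_sup _ _ hIcd]
    ext x; simp only [Set.mem_union, Set.mem_inter_iff]; tauto
  · -- inf
    rintro ⟨i, j⟩ ⟨i', j'⟩
    show ![∅, Set.Iic a, Set.Iic b] (i ⊓ i') ∪ ![∅, Set.Iic c, Set.Iic d] (j ⊓ j') ∪
      (Set.Iic b ∩ Set.Iic d) = _
    rw [chain3_inf _ _ hIab, chain3_inf _ _ hIcd]
    exact (inter_cross _ _ _ _ _ _ (chain3_sub _ _ hIab i) (chain3_sub _ _ hIab i')
      (chain3_sub _ _ hIcd j) (chain3_sub _ _ hIcd j')).symm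
end

section
/- Let P be a finite poset with n ≥ 2 elements that is (2+2)-free, (1+1+1)-free, and irreducible with respect to ordinal sum. Then the number of lower sets of P (including ∅ and P) is exactly 2n. -/
/-!
Strict down-sets in a (2+2)-free poset form a chain, so some `v` has the largest one; by
(1+1+1)-freeness `v` is then incomparable to exactly one element `u`: it is a leaf of the
incomparability graph, which is connected by irreducibility. Every lower set of `P ∖ {v}` extends to
a lower set of `P` by adding `v` or not, and exactly two of them, `{x | x < v}` and
`{x | x < v} ∪ {u}`, extend in both ways. So deleting the leaf `v` loses exactly two lower sets, and
induction on the size of `P` (the incomparability graph stays connected) gives `2 |P|`.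
-/

open SimpleGraph

def incompGraph (P : Type*) [PartialOrder P] : SimpleGraph P where
  Adj := IncompRel (· ≤ ·)
  symm := inferInstance
  loopless := ⟨fun _ h => h.1 le_rfl⟩

section ForbiddenSubposets

variable {P Q : Type*} [PartialOrder P] [PartialOrder Q]

theorem TwoTwoFree.of_orderEmbedding (f : Q ↪o P) (h : TwoTwoFree P) : TwoTwoFree Q := by
  rintro ⟨a, b, c, d, habcd⟩
  exact h ⟨f a, f b, f c, f d, by simpa [f.injective.ne_iff] using habcd⟩

theorem OneOneOneFree.of_orderEmbedding (f : Q ↪o P) (h : OneOneOneFree P) :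
    OneOneOneFree Q := by
  rintro ⟨a, b, c, habc⟩
  exact h ⟨f a, f b, f c, by simpa [f.injective.ne_iff] using habc⟩

theorem TwoTwoFree.Iio_subset_total (h : TwoTwoFree P) (x y : P) :
    Set.Iio x ⊆ Set.Iio y ∨ Set.Iio y ⊆ Set.Iio x := by
  by_contra! hxy
  obtain ⟨⟨a, hax, hay⟩, ⟨b, hby, hbx⟩⟩ := And.imp Set.not_subset.1 Set.not_subset.1 hxy
  simp only [Set.mem_Iio] at hax hay hby hbx
  refine h ⟨a, x, b, y, hax, hby, ?_⟩
  refine ⟨?_, ?_, ?_, ?_, ?_, ?_, ?_, ?_, ?_, ?_, ?_, ?_⟩ <;> order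

end ForbiddenSubposets

section IncomparabilityGraph

variable {P : Type*} [PartialOrder P]

theorem exists_existsUnique_incompRel [Finite P] [Nontrivial P] (h22 : TwoTwoFree P)
    (h111 : OneOneOneFree P) (hconn : (incompGraph P).Connected) :
    ∃ v : P, ∃! u : P, IncompRel (· ≤ ·) v u := by
  obtain ⟨v, hv⟩ : ∃ v : P, ∀ y, Set.Iio y ⊆ Set.Iio v := by
    obtain ⟨v, hmax⟩ := Finite.exists_max fun y : P => (Set.Iio y).ncard
    refine ⟨v, fun y => (h22.Iio_subset_total y v).elim id fun hvy => ?_⟩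
    exact (Set.eq_of_subset_of_ncard_le hvy (hmax y)).ge
  obtain ⟨u, hu⟩ := hconn.preconnected.exists_adj_of_nontrivial v
  refine ⟨v, u, hu, fun z hz => ?_⟩
  -- `z` and `u` are comparable, and the smaller one would lie below `v`
  by_contra hzu
  have hcomp : z ≤ u ∨ u ≤ z := by
    by_contra! hinc
    exact h111 ⟨v, z, u, hz.ne, hu.ne, hzu, hz.1, hz.2, hu.1, hu.2, hinc.1, hinc.2⟩
  rcases hcomp with hle | hle
  · exact hz.2 (hv u (lt_of_le_of_ne hle hzu)).le
  · exact hu.2 (hv z (lt_of_le_of_ne hle (Ne.symm hzu))).le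

theorem lt_of_not_reachable_of_reachable {m a c : P} (hm : IsMax m)
    (ha : ¬ (incompGraph P).Reachable m a) (hc : (incompGraph P).Reachable m c) : a < c := by
  have hcomp : ∀ c, (incompGraph P).Reachable m c → c ≤ a ∨ a ≤ c := fun c hc => by
    by_contra! hca
    exact ha (hc.trans (Adj.reachable hca))
  suffices ¬ c ≤ a from lt_of_le_not_ge ((hcomp c hc).resolve_left this) this
  simp only [reachable_iff_reflTransGen] at hc hcomp
  -- a reachable `b` with `¬ b ≤ a` satisfies `a ≤ b`, so no neighbour `c` of `b` has `c ≤ a`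
  induction hc with
  | refl => exact fun hma => ha (le_antisymm hma (hm hma) ▸ Reachable.rfl)
  | tail hmb hbc ih => exact fun hca => hbc.2 (hca.trans ((hcomp _ hmb).resolve_left ih))

theorem OrdinalSumIrreducible.connected_incompGraph [Finite P] [Nonempty P]
    (h : OrdinalSumIrreducible P) : (incompGraph P).Connected := by
  obtain ⟨m, -, hm⟩ := Set.finite_univ.exists_maximal (Set.univ_nonempty (α := P))
  set G := incompGraph P
  refine G.connected_iff_exists_forall_reachable.2 ⟨m, fun a => ?_⟩
  by_contra ha
  exact h ⟨{c | ¬ G.Reachable m c}, {c | G.Reachable m c}, ⟨a, ha⟩, ⟨m, Reachable.rfl⟩,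
    Set.disjoint_left.2 fun _ h h' => h h', by ext; simp [em'],
    fun a ha c hc => lt_of_not_reachable_of_reachable (fun _ => hm trivial) ha hc⟩

end IncomparabilityGraph

section Counting

variable {P : Type*} [PartialOrder P]

theorem bijOn_preimage_lowerSets_of_notMem (v : P) :
    Set.BijOn (Subtype.val ⁻¹' ·) {s : Set P | IsLowerSet s ∧ v ∉ s}
      {t : Set ({v}ᶜ : Set P) | IsLowerSet t ∧ ∀ x ∈ t, ¬ v ≤ x} := by
  refine Set.InvOn.bijOn (f' := (Subtype.val '' ·)) ⟨fun s ⟨_, hv⟩ => ?_, fun t _ => ?_⟩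
    (fun s ⟨hs, hv⟩ => ⟨hs.preimage (Subtype.mono_coe _), fun x hx hvx => hv (hs hvx hx)⟩)
    (fun t ⟨ht, hv⟩ => ⟨?_, ?_⟩)
  · simp [Subtype.image_preimage_coe, Set.inter_eq_right.2 (Set.subset_compl_singleton_iff.2 hv)]
  · exact Set.preimage_image_eq t Subtype.val_injective
  · rintro _ y hyx ⟨x, hx, rfl⟩
    have hyv : y ≠ v := by rintro rfl; exact hv x hx hyx
    exact ⟨⟨y, hyv⟩, ht (show (⟨y, hyv⟩ : ({v}ᶜ : Set P)) ≤ x from hyx) hx, rfl⟩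
  · rintro ⟨x, hx, hxv⟩
    exact x.2 hxv

theorem bijOn_preimage_lowerSets_of_mem (v : P) :
    Set.BijOn (Subtype.val ⁻¹' ·) {s : Set P | IsLowerSet s ∧ v ∈ s}
      {t : Set ({v}ᶜ : Set P) | IsLowerSet t ∧ ∀ x : ({v}ᶜ : Set P), x.1 < v → x ∈ t} := by
  refine Set.InvOn.bijOn (f' := fun t => insert v (Subtype.val '' t))
    ⟨fun s ⟨_, hv⟩ => ?_, fun t _ => ?_⟩
    (fun s ⟨hs, hv⟩ => ⟨hs.preimage (Subtype.mono_coe _), fun x hx => hs hx.le hv⟩)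
    (fun t ⟨ht, hv⟩ => ⟨?_, Set.mem_insert v _⟩)
  · dsimp only
    rw [Subtype.image_preimage_coe, Set.inter_comm, ← Set.sdiff_eq, Set.insert_sdiff_singleton,
      Set.insert_eq_of_mem hv]
  · ext x
    have hxv : (x : P) ≠ v := x.2
    simp [hxv]
  · rintro a y hya ha
    by_cases hyv : y = v
    · exact Set.mem_insert_iff.2 (Or.inl hyv)
    refine Set.mem_insert_of_mem _ ⟨⟨y, hyv⟩, ?_, rfl⟩
    obtain rfl | ⟨x, hx, rfl⟩ := ha
    · exact hv _ (lt_of_le_of_ne hya hyv)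
    · exact ht (show (⟨y, hyv⟩ : ({v}ᶜ : Set P)) ≤ x from hya) hx

theorem ncard_lowerSets_eq_add [Finite P] (v : P) :
    {s : Set P | IsLowerSet s}.ncard =
      {t : Set ({v}ᶜ : Set P) | IsLowerSet t ∧ ∀ x ∈ t, ¬ v ≤ x}.ncard +
      {t : Set ({v}ᶜ : Set P) | IsLowerSet t ∧ ∀ x : ({v}ᶜ : Set P), x.1 < v → x ∈ t}.ncard := by
  have hsplit : {s : Set P | IsLowerSet s} =
      {s | IsLowerSet s ∧ v ∉ s} ∪ {s | IsLowerSet s ∧ v ∈ s} := by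
    ext s
    simp only [Set.mem_ofPred_eq, Set.mem_union]
    tauto
  rw [hsplit, Set.ncard_union_eq (Set.disjoint_left.2 fun _ h h' => h.2 h'.2),
    (bijOn_preimage_lowerSets_of_notMem v).ncard_eq, (bijOn_preimage_lowerSets_of_mem v).ncard_eq]

theorem lt_or_lt_or_eq_of_incompRel_iff {v u : P} (hu : ∀ z, IncompRel (· ≤ ·) v z ↔ z = u)
    {x : P} (hxv : x ≠ v) : x < v ∨ v < x ∨ x = u := by
  by_cases hvx : IncompRel (· ≤ ·) v x
  · exact .inr (.inr ((hu x).1 hvx))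
  rcases not_incompRel_iff_symmGen.1 hvx with h | h
  · exact .inr (.inl (lt_of_le_of_ne h hxv.symm))
  · exact .inl (lt_of_le_of_ne h hxv)

theorem lowerSets_inter_eq_pair {v u : P} (hu : ∀ z, IncompRel (· ≤ ·) v z ↔ z = u) :
    {t : Set ({v}ᶜ : Set P) | IsLowerSet t ∧ ∀ x ∈ t, ¬ v ≤ x} ∩
      {t | IsLowerSet t ∧ ∀ x : ({v}ᶜ : Set P), x.1 < v → x ∈ t} =
      {{x | x.1 < v}, insert ⟨u, ((hu u).2 rfl).ne.symm⟩ {x | x.1 < v}} := by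
  set D : Set ({v}ᶜ : Set P) := {x | x.1 < v}
  set u' : ({v}ᶜ : Set P) := ⟨u, ((hu u).2 rfl).ne.symm⟩
  have hvu : ¬ v ≤ u := ((hu u).2 rfl).1
  have hD : IsLowerSet D := fun _ _ hba ha => lt_of_le_of_lt hba ha
  have huD : IsLowerSet (insert u' D) := by
    rintro a b hba ha
    rcases lt_or_lt_or_eq_of_incompRel_iff hu b.2 with h | h | h
    · exact Or.inr h
    · obtain rfl | ha := ha
      · exact absurd (h.le.trans hba) hvu
      · exact absurd (h.trans_le hba) (lt_asymm ha)
    · exact Or.inl (Subtype.ext h)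
  ext t
  simp only [Set.mem_inter_iff, Set.mem_ofPred_eq, Set.mem_insert_iff, Set.mem_singleton_iff]
  constructor
  · rintro ⟨⟨ht, hnv⟩, -, hDt⟩
    have hsub : t ⊆ insert u' D := fun x hx => by
      rcases lt_or_lt_or_eq_of_incompRel_iff hu x.2 with h | h | h
      · exact Or.inr h
      · exact absurd h.le (hnv x hx)
      · exact Or.inl (Subtype.ext h)
    by_cases hut : u' ∈ t
    · exact .inr (hsub.antisymm (Set.insert_subset hut hDt))
    · refine .inl (Set.Subset.antisymm (fun x hx => ?_) hDt)
      exact (hsub hx).resolve_left fun h => hut (h ▸ hx)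
  · rintro (rfl | rfl)
    · exact ⟨⟨hD, fun x hx => not_le_of_gt hx⟩, hD, fun _ hx => hx⟩
    · refine ⟨⟨huD, ?_⟩, huD, fun _ hx => Or.inr hx⟩
      rintro x (rfl | hx)
      · exact hvu
      · exact not_le_of_gt hx

theorem ncard_lowerSets_eq_ncard_lowerSets_compl_add_two [Finite P] {v u : P}
    (hu : ∀ z, IncompRel (· ≤ ·) v z ↔ z = u) :
    {s : Set P | IsLowerSet s}.ncard = {t : Set ({v}ᶜ : Set P) | IsLowerSet t}.ncard + 2 := by
  have hne :
      {x | x.1 < v} ≠ insert (⟨u, ((hu u).2 rfl).ne.symm⟩ : ({v}ᶜ : Set P)) {x | x.1 < v} := by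
    refine (Set.insert_ne_self.2 fun h => ?_).symm
    exact ((hu u).2 rfl).2 (le_of_lt h)
  rw [ncard_lowerSets_eq_add v, ← Set.ncard_union_add_ncard_inter, lowerSets_inter_eq_pair hu,
    Set.ncard_pair hne]
  congr 2
  ext t
  refine ⟨fun h => h.elim And.left And.left, fun ht => ?_⟩
  by_cases hv : ∃ x ∈ t, v ≤ x
  · obtain ⟨x, hx, hvx⟩ := hv
    exact .inr ⟨ht, fun y hy => ht (show (y : P) ≤ x from (hy.trans_le hvx).le) hx⟩
  · exact .inl ⟨ht, fun x hx hvx => hv ⟨x, hx, hvx⟩⟩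

end Counting

theorem ncard_lowerSets_of_connected {Q : Type*} [PartialOrder Q] [Finite Q]
    (h22 : TwoTwoFree Q) (h111 : OneOneOneFree Q) (hconn : (incompGraph Q).Connected) :
    {s : Set Q | IsLowerSet s}.ncard = 2 * Nat.card Q := by
  induction hn : Nat.card Q using Nat.strong_induction_on generalizing Q with | _ n ih
  have hne := hconn.nonempty
  rcases subsingleton_or_nontrivial Q with hQ | hQ
  · have hlower : {s : Set Q | IsLowerSet s} = {∅, Set.univ} := by
      ext s
      refine ⟨fun _ => ?_, by rintro (rfl | rfl); exacts [isLowerSet_empty, isLowerSet_univ]⟩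
      exact s.eq_empty_or_nonempty.imp_right fun ⟨x, hx⟩ =>
        Set.eq_univ_of_forall fun y => Subsingleton.elim x y ▸ hx
    rw [hlower, Set.ncard_pair Set.empty_ne_univ, ← hn, Nat.card_eq_one_iff_unique.2 ⟨hQ, hne⟩]
  obtain ⟨v, u, hvu, huniq⟩ := exists_existsUnique_incompRel h22 h111 hconn
  have hu : ∀ z, IncompRel (· ≤ ·) v z ↔ z = u := fun z => ⟨huniq z, by rintro rfl; exact hvu⟩
  have hconn' : (incompGraph ({v}ᶜ : Set Q)).Connected := by
    classical
    have := Fintype.ofFinite Q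
    exact hconn.induce_compl_singleton_of_degree_eq_one
      (degree_eq_one_iff_existsUnique_adj.2 ⟨u, hvu, huniq⟩)
  have hcard : Nat.card ({v}ᶜ : Set Q) = n - 1 := by
    rw [Nat.card_coe_set_eq, Set.ncard_compl, Set.ncard_singleton, hn]
  have hn2 := Finite.one_lt_card (α := Q)
  rw [ncard_lowerSets_eq_ncard_lowerSets_compl_add_two hu,
    ih (n - 1) (by omega) (h22.of_orderEmbedding (OrderEmbedding.subtype _))
      (h111.of_orderEmbedding (OrderEmbedding.subtype _)) hconn' hcard]
  omega

/-- A finite `{(2+2),(1+1+1)}`-free poset with `n ≥ 2` elements that is irreducible with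
respect to ordinal sum has exactly `2n` lower sets (including `∅` and `P`). -/
theorem statement15 {P : Type*} [PartialOrder P] [Fintype P]
    (hn : 2 ≤ Fintype.card P)
    (h22 : TwoTwoFree P) (h111 : OneOneOneFree P) (hirr : OrdinalSumIrreducible P) :
    Nat.card {s : Set P // IsLowerSet s} = 2 * Fintype.card P := by
  have : Nonempty P := Fintype.card_pos_iff.1 (by omega)
  rw [← Nat.card_eq_fintype_card,
    ← ncard_lowerSets_of_connected h22 h111 hirr.connected_incompGraph]
  exact Nat.card_coe_set_eq _
end
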